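/- In the unweighted 1D point graph setting, the dynamic programming recurrence opt'(j,i) = opt'(j-1,i-1) + |i - deg⁺(v_j)| holds for 0 < i ≤ j, and opt'(j,0) = opt(j-1) + deg⁺(v_j), where deg⁺(v_j) is the number of neighbors of v_j among vertices 0,...,j-1. -/

import Mathlib

open Finset

def samePartN {s : Finset ℕ} (P : Finpartition s) (a b : ℕ) : Prop :=
  ∃ t ∈ P.parts, a ∈ t ∧ b ∈ t

instance {s : Finset ℕ} (P : Finpartition s) (a b : ℕ) : Decidable (samePartN P a b) := by
  unfold samePartN; infer_instance

/-- A partition into sets of consecutive integers. -/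
def IsConsecPartition {s : Finset ℕ} (P : Finpartition s) : Prop :=
  ∀ t ∈ P.parts, ∀ a ∈ t, ∀ b ∈ t, ∀ c, a ≤ c → c ≤ b → c ∈ t

/-- Weighted editing cost of a partition: `w⁻` for same-part pairs, `w⁺` for
cross-part pairs. -/
noncomputable def pcost (w : ℕ → ℕ → ℝ) (s : Finset ℕ) (P : Finpartition s) : ℝ :=
  ∑ b ∈ s, ∑ a ∈ s.filter (· < b),
    if samePartN P a b then max (-w a b) 0 else max (w a b) 0

/-- `opt' w j i`: minimum cost of a consecutive partition of `{0,…,j}` whose last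
part is `{j-i,…,j}`. -/
noncomputable def opt' (w : ℕ → ℕ → ℝ) (j i : ℕ) : ℝ :=
  sInf ((fun P => pcost w (Finset.range (j + 1)) P) ''
    {P | IsConsecPartition P ∧ Finset.Icc (j - i) j ∈ P.parts})

/-- `opt w j`: minimum cost of a consecutive partition of `{0,…,j}`. -/
noncomputable def opt (w : ℕ → ℕ → ℝ) (j : ℕ) : ℝ :=
  sInf ((fun P => pcost w (Finset.range (j + 1)) P) '' {P | IsConsecPartition P})

/-- Unweighted point-graph weights: `1` on edges, `-1` on non-edges. -/
noncomputable def wPt (x : ℕ → ℝ) (l : ℝ) (a b : ℕ) : ℝ :=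
  if |x a - x b| ≤ l then 1 else -1

/-- Number of neighbours of `v_j` among vertices `0,…,j-1`. -/
noncomputable def degPlus (x : ℕ → ℝ) (l : ℝ) (j : ℕ) : ℕ :=
  ((Finset.range j).filter fun k => |x k - x j| ≤ l).card

/-!
A consecutive partition of `{0,…,j}` with last part `{j-i,…,j}` is a consecutive partition `S` of
`{0,…,j-i-1}` with that part added, and its cost is the cost of `S` plus, for each `b` in the last
part, the cost of the pairs `(a, b)` with `a < b`. So `opt'(j,i)` is the optimum over
`{0,…,j-i-1}` plus a sum over the last part, and passing from `(j-1,i-1)` to `(j,i)` adds the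
single term for `b = j`. As `x` is monotone, the neighbours of `v_j` before it are the last
`deg⁺(v_j)` vertices, so that term is `|i - deg⁺(v_j)|`.
-/

namespace Finpartition

variable {α : Type*} [GeneralizedBooleanAlgebra α] [DecidableEq α] {a t : α}

def erasePart (P : Finpartition a) (ht : t ∈ P.parts) : Finpartition (a \ t) :=
  P.ofSubset (erase_subset t P.parts) <| by
    have hdisj : Disjoint t ((P.parts.erase t).sup id) :=
      P.supIndep (erase_subset t P.parts) ht (notMem_erase t P.parts)
    have hsup := P.sup_parts
    rw [← insert_erase ht, sup_insert, id] at hsup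
    calc (P.parts.erase t).sup id = (t ⊔ (P.parts.erase t).sup id) \ t := by
          rw [sup_sdiff_left_self, hdisj.symm.sdiff_eq_left]
      _ = a \ t := by rw [hsup]

end Finpartition

section ConsecPartition

lemma isConsecPartition_bot (s : Finset ℕ) : IsConsecPartition (⊥ : Finpartition s) := by
  intro t ht a ha b hb c hac hcb
  obtain ⟨m, -, rfl⟩ := Finpartition.mem_bot_iff.1 ht
  rw [mem_singleton] at ha hb ⊢
  omega

lemma IsConsecPartition.of_parts_subset {s s' : Finset ℕ} {P : Finpartition s}
    {Q : Finpartition s'} (hP : IsConsecPartition P) (h : Q.parts ⊆ P.parts) :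
    IsConsecPartition Q :=
  fun t ht => hP t (h ht)

lemma isConsecPartition_of_parts_eq_insert_Icc {s s' : Finset ℕ} {P : Finpartition s}
    {S : Finpartition s'} {u v : ℕ} (hS : IsConsecPartition S)
    (h : P.parts = insert (Icc u v) S.parts) : IsConsecPartition P := by
  intro t ht a ha b hb c hac hcb
  rw [h, mem_insert] at ht
  rcases ht with rfl | ht
  · rw [mem_Icc] at ha hb ⊢
    omega
  · exact hS t ht a ha b hb c hac hcb

end ConsecPartition

noncomputable def optRange (w : ℕ → ℕ → ℝ) (k : ℕ) : ℝ :=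
  sInf ((fun P => pcost w (range k) P) '' {P | IsConsecPartition P})

lemma opt_eq_optRange (w : ℕ → ℕ → ℝ) (j : ℕ) : opt w j = optRange w (j + 1) := rfl

/-- The editing cost of the pairs `(a, b)`, `a < b`, when `b` lies in a part starting at `k`. -/
noncomputable def colCost (w : ℕ → ℕ → ℝ) (k b : ℕ) : ℝ :=
  ∑ a ∈ range b, if k ≤ a then max (-w a b) 0 else max (w a b) 0

section Cost

variable {k j : ℕ} {S : Finpartition (range k)} {P : Finpartition (range (j + 1))}

lemma samePartN_iff_of_lt (h : P.parts = insert (Icc k j) S.parts) {a b : ℕ}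
    (ha : a < k) : samePartN P a b ↔ samePartN S a b := by
  constructor
  · rintro ⟨t, ht, hat, hbt⟩
    rw [h, mem_insert] at ht
    rcases ht with rfl | ht
    · exact absurd (mem_Icc.1 hat).1 (by omega)
    · exact ⟨t, ht, hat, hbt⟩
  · rintro ⟨t, ht, hat, hbt⟩
    exact ⟨t, h ▸ mem_insert_of_mem ht, hat, hbt⟩

lemma samePartN_iff_of_mem_Icc (h : P.parts = insert (Icc k j) S.parts) {a b : ℕ}
    (hab : a < b) (hb : b ∈ Icc k j) : samePartN P a b ↔ k ≤ a := by
  rw [mem_Icc] at hb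
  constructor
  · rintro ⟨t, ht, hat, hbt⟩
    rw [h, mem_insert] at ht
    rcases ht with rfl | ht
    · exact (mem_Icc.1 hat).1
    · exact absurd (mem_range.1 (S.le ht hbt)) (by omega)
  · intro hka
    exact ⟨Icc k j, h ▸ mem_insert_self _ _, mem_Icc.2 ⟨hka, by omega⟩, mem_Icc.2 hb⟩

lemma pcost_range (w : ℕ → ℕ → ℝ) {n : ℕ} (Q : Finpartition (range n)) :
    pcost w (range n) Q = ∑ b ∈ range n, ∑ a ∈ range b,
      if samePartN Q a b then max (-w a b) 0 else max (w a b) 0 := by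
  refine sum_congr rfl fun b hb => ?_
  rw [show (range n).filter (· < b) = range b by
    ext a; simp only [mem_filter, mem_range] at hb ⊢; omega]

lemma pcost_of_parts_eq_insert_Icc (w : ℕ → ℕ → ℝ) (hkj : k ≤ j)
    (h : P.parts = insert (Icc k j) S.parts) :
    pcost w (range (j + 1)) P = pcost w (range k) S + ∑ b ∈ Ico k (j + 1), colCost w k b := by
  rw [pcost_range, pcost_range, ← sum_range_add_sum_Ico _ (by omega : k ≤ j + 1)]
  congr 1
  · refine sum_congr rfl fun b hb => sum_congr rfl fun a ha => ?_
    rw [mem_range] at ha hb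
    exact if_congr (samePartN_iff_of_lt h (ha.trans hb)) rfl rfl
  · refine sum_congr rfl fun b hb => sum_congr rfl fun a ha => ?_
    rw [mem_range] at ha
    rw [mem_Ico] at hb
    exact if_congr (samePartN_iff_of_mem_Icc h ha (mem_Icc.2 ⟨hb.1, by omega⟩)) rfl rfl

end Cost

lemma pcost_nonneg (w : ℕ → ℕ → ℝ) (s : Finset ℕ) (P : Finpartition s) : 0 ≤ pcost w s P :=
  sum_nonneg fun _ _ => sum_nonneg fun _ _ => by split <;> exact le_max_right _ _

lemma image_pcost_lastPart_Icc (w : ℕ → ℕ → ℝ) {k j : ℕ} (hkj : k ≤ j) :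
    (fun P => pcost w (range (j + 1)) P) ''
        {P | IsConsecPartition P ∧ Icc k j ∈ P.parts}
      = (· + ∑ b ∈ Ico k (j + 1), colCost w k b) ''
          ((fun S => pcost w (range k) S) '' {S | IsConsecPartition S}) := by
  ext r
  constructor
  · rintro ⟨P, ⟨hP, hPt⟩, rfl⟩
    have hrest : range (j + 1) \ Icc k j = range k := by
      ext a; simp only [mem_sdiff, mem_range, mem_Icc]; omega
    set S := (P.erasePart hPt).copy hrest
    have hPS : P.parts = insert (Icc k j) S.parts := (insert_erase hPt).symm
    exact ⟨_, ⟨S, hP.of_parts_subset (erase_subset _ _), rfl⟩,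
      (pcost_of_parts_eq_insert_Icc w hkj hPS).symm⟩
  · rintro ⟨_, ⟨S, hS, rfl⟩, rfl⟩
    have hne : Icc k j ≠ ⊥ := (nonempty_Icc.2 hkj).ne_empty
    have hdisj : Disjoint (range k) (Icc k j) := by
      rw [disjoint_left]; intro a; simp only [mem_range, mem_Icc]; omega
    have hunion : range k ⊔ Icc k j = range (j + 1) := by
      ext a; simp only [sup_eq_union, mem_union, mem_range, mem_Icc]; omega
    set P := S.extend hne hdisj hunion
    have hPS : P.parts = insert (Icc k j) S.parts := rfl
    exact ⟨P, ⟨isConsecPartition_of_parts_eq_insert_Icc hS hPS, hPS ▸ mem_insert_self _ _⟩,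
      pcost_of_parts_eq_insert_Icc w hkj hPS⟩

lemma opt'_eq_optRange_add (w : ℕ → ℕ → ℝ) (j i : ℕ) :
    opt' w j i = optRange w (j - i) + ∑ b ∈ Ico (j - i) (j + 1), colCost w (j - i) b := by
  have hne : ((fun S => pcost w (range (j - i)) S) '' {S | IsConsecPartition S}).Nonempty :=
    ⟨_, ⟨⊥, isConsecPartition_bot _, rfl⟩⟩
  have hbdd : BddBelow ((fun S => pcost w (range (j - i)) S) '' {S | IsConsecPartition S}) :=
    ⟨0, by rintro _ ⟨S, -, rfl⟩; exact pcost_nonneg w _ S⟩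
  have h := (OrderIso.addRight (∑ b ∈ Ico (j - i) (j + 1), colCost w (j - i) b)).map_csInf'
    hne hbdd
  rw [OrderIso.addRight_apply] at h
  rw [optRange, h, opt', image_pcost_lastPart_Icc w (Nat.sub_le j i)]
  rfl

lemma eq_Ico_sub_card_of_upClosed {S : Finset ℕ} {j : ℕ} (hS : S ⊆ range j)
    (hup : ∀ a ∈ S, ∀ b, a ≤ b → b < j → b ∈ S) : S = Ico (j - #S) j := by
  obtain ⟨m, rfl⟩ : ∃ m, S = Ico m j := by
    rcases S.eq_empty_or_nonempty with rfl | hne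
    · exact ⟨j, by simp⟩
    · refine ⟨S.min' hne, ext fun a => ⟨fun ha => ?_, fun ha => ?_⟩⟩
      · exact mem_Ico.2 ⟨S.min'_le a ha, mem_range.1 (hS ha)⟩
      · exact hup _ (S.min'_mem hne) a (mem_Ico.1 ha).1 (mem_Ico.1 ha).2
  rw [Nat.card_Ico]
  ext a
  simp only [mem_Ico]
  omega

section PointGraph

variable {x : ℕ → ℝ} {l : ℝ}

lemma adj_iff_le_of_monotone (hx : Monotone x) {a j : ℕ} (ha : a < j) :
    |x a - x j| ≤ l ↔ j - degPlus x l j ≤ a := by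
  have hnbr : (range j).filter (fun k => |x k - x j| ≤ l) = Ico (j - degPlus x l j) j := by
    refine eq_Ico_sub_card_of_upClosed (filter_subset _ _) fun a ha b hab hbj => ?_
    simp only [mem_filter, mem_range] at ha ⊢
    refine ⟨hbj, ?_⟩
    have hxa := hx hab
    have hxb := hx hbj.le
    rw [abs_sub_comm, abs_of_nonneg (by linarith)] at ha ⊢
    linarith
  simpa [ha] using congrArg (a ∈ ·) hnbr

lemma degPlus_le (x : ℕ → ℝ) (l : ℝ) (j : ℕ) : degPlus x l j ≤ j :=
  (card_filter_le _ _).trans (card_range j).le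

lemma colCost_wPt (hx : Monotone x) {i j : ℕ} (hij : i ≤ j) :
    colCost (wPt x l) (j - i) j = |(i : ℝ) - degPlus x l j| := by
  set d := degPlus x l j
  have hdj : d ≤ j := degPlus_le x l j
  -- `(a, j)` is charged iff exactly one of `j - i ≤ a` (same part) and `j - d ≤ a` (adjacent) holds
  have hterm : ∀ a ∈ range j,
      (if j - i ≤ a then max (-wPt x l a j) 0 else max (wPt x l a j) 0)
        = if a ∈ Ico (min (j - i) (j - d)) (max (j - i) (j - d)) then 1 else 0 := by
    intro a ha
    have hadj : |x a - x j| ≤ l ↔ j - d ≤ a := adj_iff_le_of_monotone hx (mem_range.1 ha)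
    simp only [wPt, hadj, mem_Ico, min_le_iff, lt_max_iff]
    split_ifs <;> first | omega | norm_num
  have hfilter : (range j).filter (· ∈ Ico (min (j - i) (j - d)) (max (j - i) (j - d)))
      = Ico (min (j - i) (j - d)) (max (j - i) (j - d)) := by
    ext a; simp only [mem_filter, mem_range, mem_Ico]; omega
  rw [colCost, sum_congr rfl hterm, sum_boole, hfilter, Nat.card_Ico, Nat.cast_sub min_le_max,
    Nat.cast_max, Nat.cast_min, max_sub_min_eq_abs', Nat.cast_sub hij, Nat.cast_sub hdj,
    abs_sub_comm]
  ring_nf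

end PointGraph

theorem dp_recurrence_unweighted_general (x : ℕ → ℝ) (hx : Monotone x) (l : ℝ)
    (j i : ℕ) (hj : 1 ≤ j) (hij : i ≤ j) :
    opt' (wPt x l) j 0 = opt (wPt x l) (j - 1) + (degPlus x l j : ℝ) ∧
    (0 < i →
      opt' (wPt x l) j i
        = opt' (wPt x l) (j - 1) (i - 1) + |(i : ℝ) - (degPlus x l j : ℝ)|) := by
  constructor
  · have hcol := colCost_wPt (l := l) hx (Nat.zero_le j)
    rw [Nat.sub_zero, Nat.cast_zero, zero_sub, abs_neg, Nat.abs_cast] at hcol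
    rw [opt'_eq_optRange_add, Nat.sub_zero, Nat.Ico_succ_singleton, sum_singleton, hcol,
      opt_eq_optRange, Nat.sub_add_cancel hj]
  · intro hi
    rw [opt'_eq_optRange_add, opt'_eq_optRange_add, show j - 1 - (i - 1) = j - i by omega,
      Nat.sub_add_cancel hj, sum_Ico_succ_top (Nat.sub_le j i), colCost_wPt hx hij, add_assoc]

/-- The unweighted 1D dynamic programming recurrence:
`opt'(j,0) = opt(j-1) + deg⁺(v_j)` and `opt'(j,i) = opt'(j-1,i-1) + |i - deg⁺(v_j)|`
for `0 < i ≤ j`. -/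
theorem dp_recurrence_unweighted (x : ℕ → ℝ) (hx : Monotone x) (l : ℝ) (hl : 0 ≤ l)
    (j i : ℕ) (hj : 1 ≤ j) (hij : i ≤ j) :
    opt' (wPt x l) j 0 = opt (wPt x l) (j - 1) + (degPlus x l j : ℝ) ∧
    (0 < i →
      opt' (wPt x l) j i
        = opt' (wPt x l) (j - 1) (i - 1) + |(i : ℝ) - (degPlus x l j : ℝ)|) :=
  dp_recurrence_unweighted_general x hx l j i hj hij
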